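/- Let 𝔏 be the real span of the vector fields {F^l_k : −1 ≤ l ≤ k} ∪ {Θ^m_n : 0 ≤ m ≤ n} and let 𝔗 ⊆ 𝔏 be the real span of {Θ^m_n : 0 ≤ m ≤ n}. Then 𝔗 is an abelian Lie ideal of 𝔏: for all v ∈ 𝔏 and w ∈ 𝔗 one has [v,w] ∈ 𝔗, and [w,w'] = 0 for all w, w' ∈ 𝔗. -/
import Mathlib

noncomputable section
open MvPolynomial

/-- Polynomial functions of the variables x, y, z (indexed `0, 1, 2`). -/
abbrev Poly3 := MvPolynomial (Fin 3) ℝ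

/-- Polynomial vector fields on ℝ³, given by their three components. -/
abbrev VF3 := Fin 3 → Poly3

/-- The derivation action `v(g) = v₁ ∂g/∂x + v₂ ∂g/∂y + v₃ ∂g/∂z`. -/
def applyVF (v : VF3) (g : Poly3) : Poly3 := ∑ i, v i * pderiv i g

/-- The Lie bracket `[v,w] := v∘w − w∘v`, with i-th component `v(wᵢ) − w(vᵢ)`. -/
def bracket (v w : VF3) : VF3 := fun i => applyVF v (w i) - applyVF w (v i)

/-- The divergence `div v = ∂v₁/∂x + ∂v₂/∂y + ∂v₃/∂z`. -/
def divergence (v : VF3) : Poly3 := ∑ i, pderiv i (v i)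

/-- The vector field `F^l_k := x^l (y²+z²)^(k−l) ((k−l+1) x ∂_x − ((l+1)/2) y ∂_y − ((l+1)/2) z ∂_z)`
for integers `−1 ≤ l ≤ k`; for `l = −1` the second and third components vanish and this is
`(k+2)(y²+z²)^(k+1) ∂_x`. -/
def Fvf (l k : ℤ) : VF3 :=
  ![C ((k - l + 1 : ℤ) : ℝ) * X 0 ^ (l + 1).toNat * (X 1 ^ 2 + X 2 ^ 2) ^ (k - l).toNat,
    C (-((l + 1 : ℤ) : ℝ) / 2) * X 0 ^ l.toNat * X 1 * (X 1 ^ 2 + X 2 ^ 2) ^ (k - l).toNat,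
    C (-((l + 1 : ℤ) : ℝ) / 2) * X 0 ^ l.toNat * X 2 * (X 1 ^ 2 + X 2 ^ 2) ^ (k - l).toNat]

/-- The vector field `Θ^m_n := x^m (y²+z²)^(n−m) (z ∂_y − y ∂_z)` for integers `0 ≤ m ≤ n`. -/
def Tvf (m n : ℤ) : VF3 :=
  ![0,
    X 0 ^ m.toNat * (X 1 ^ 2 + X 2 ^ 2) ^ (n - m).toNat * X 2,
    -(X 0 ^ m.toNat * (X 1 ^ 2 + X 2 ^ 2) ^ (n - m).toNat * X 1)]

/-- 𝔏: the real span of the vector fields `F^l_k` (`−1 ≤ l ≤ k`) and `Θ^m_n` (`0 ≤ m ≤ n`). -/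
def Lfrak : Submodule ℝ VF3 :=
  Submodule.span ℝ
    ({v | ∃ l k : ℤ, -1 ≤ l ∧ l ≤ k ∧ v = Fvf l k} ∪
      {v | ∃ m n : ℤ, 0 ≤ m ∧ m ≤ n ∧ v = Tvf m n})

/-- 𝔗: the real span of the vector fields `Θ^m_n` (`0 ≤ m ≤ n`). -/
def Tfrak : Submodule ℝ VF3 :=
  Submodule.span ℝ {v | ∃ m n : ℤ, 0 ≤ m ∧ m ≤ n ∧ v = Tvf m n}

/-! ### Auxiliary material -/

def uu : Poly3 := X 1 ^ 2 + X 2 ^ 2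

/-- Generic version of `Fvf` with natural exponents and real coefficients. -/
def Gn (A B : ℝ) (a b : ℕ) : VF3 :=
  ![C A * X 0 ^ a * uu ^ b,
    C B * X 0 ^ (a - 1) * X 1 * uu ^ b,
    C B * X 0 ^ (a - 1) * X 2 * uu ^ b]

/-- `Tvf` with natural exponents. -/
def Tn (p q : ℕ) : VF3 :=
  ![0, X 0 ^ p * uu ^ q * X 2, -(X 0 ^ p * uu ^ q * X 1)]

lemma d10 : pderiv (1 : Fin 3) (X 0 : Poly3) = 0 := pderiv_X_of_ne (by decide)
lemma d20 : pderiv (2 : Fin 3) (X 0 : Poly3) = 0 := pderiv_X_of_ne (by decide)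
lemma d01 : pderiv (0 : Fin 3) (X 1 : Poly3) = 0 := pderiv_X_of_ne (by decide)
lemma d21 : pderiv (2 : Fin 3) (X 1 : Poly3) = 0 := pderiv_X_of_ne (by decide)
lemma d02 : pderiv (0 : Fin 3) (X 2 : Poly3) = 0 := pderiv_X_of_ne (by decide)
lemma d12 : pderiv (1 : Fin 3) (X 2 : Poly3) = 0 := pderiv_X_of_ne (by decide)

lemma du0 : pderiv (0 : Fin 3) uu = 0 := by simp [uu, pderiv_pow, d01, d02]
lemma du1 : pderiv (1 : Fin 3) uu = 2 * X 1 := by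
  simp [uu, pderiv_pow, d12, pderiv_X_self]
lemma du2 : pderiv (2 : Fin 3) uu = 2 * X 2 := by
  simp [uu, pderiv_pow, d21, pderiv_X_self]

set_option maxHeartbeats 1600000 in
lemma bracket_Tn (p q p' q' : ℕ) : bracket (Tn p q) (Tn p' q') = 0 := by
  funext i
  fin_cases i <;>
    simp [bracket, applyVF, Fin.sum_univ_three, Tn, pderiv_mul, pderiv_pow,
      pderiv_X_self, d10, d20, d01, d21, d02, d12, du0, du1, du2] <;> ring

set_option maxHeartbeats 1600000 in
lemma bracket_Gn_Tn (A B : ℝ) (a b p q : ℕ) (hB : a = 0 → B = 0) :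
    bracket (Gn A B a b) (Tn p q)
      = ((p : ℝ) * A + 2 * (q : ℝ) * B) • Tn (a + p - 1) (b + q) := by
  funext i
  rcases a with _ | a
  · rw [hB rfl]
    rcases p with _ | p <;> rcases q with _ | q <;> fin_cases i <;>
      simp [bracket, applyVF, Fin.sum_univ_three, Tn, Gn, pderiv_mul, pderiv_pow,
        pderiv_X_self, d10, d20, d01, d21, d02, d12, du0, du1, du2, smul_eq_C_mul,
        Nat.succ_sub_one, map_add, map_mul, map_natCast, map_ofNat, uu] <;>
      ring
  · rcases p with _ | p <;> rcases q with _ | q <;> fin_cases i <;>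
      simp [bracket, applyVF, Fin.sum_univ_three, Tn, Gn, pderiv_mul, pderiv_pow,
        pderiv_X_self, d10, d20, d01, d21, d02, d12, du0, du1, du2, smul_eq_C_mul,
        Nat.succ_sub_one, map_add, map_mul, map_natCast, map_ofNat, uu] <;>
      ring

lemma Tvf_eq (m n : ℤ) : Tvf m n = Tn m.toNat (n - m).toNat := rfl

lemma Fvf_eq (l k : ℤ) (h1 : -1 ≤ l) :
    Fvf l k = Gn ((k - l + 1 : ℤ) : ℝ) (-((l + 1 : ℤ) : ℝ) / 2) (l + 1).toNat (k - l).toNat := by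
  have h : (l + 1).toNat - 1 = l.toNat := by omega
  simp [Fvf, Gn, uu, h]

/-! Bilinearity of the bracket. -/

lemma applyVF_add_left (v w : VF3) (g : Poly3) :
    applyVF (v + w) g = applyVF v g + applyVF w g := by
  simp [applyVF, add_mul, Finset.sum_add_distrib]

lemma applyVF_smul_left (c : ℝ) (v : VF3) (g : Poly3) :
    applyVF (c • v) g = c • applyVF v g := by
  simp [applyVF, Finset.smul_sum, smul_mul_assoc]

lemma applyVF_zero_left (g : Poly3) : applyVF (0 : VF3) g = 0 := by simp [applyVF]

lemma applyVF_add_right (v : VF3) (g h : Poly3) :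
    applyVF v (g + h) = applyVF v g + applyVF v h := by
  simp [applyVF, mul_add, Finset.sum_add_distrib]

lemma applyVF_smul_right (c : ℝ) (v : VF3) (g : Poly3) :
    applyVF v (c • g) = c • applyVF v g := by
  simp [applyVF, Finset.smul_sum, mul_smul_comm]

lemma applyVF_zero_right (v : VF3) : applyVF v (0 : Poly3) = 0 := by simp [applyVF]

lemma bracket_zero_left (w : VF3) : bracket 0 w = 0 := by
  funext i; simp [bracket, applyVF_zero_left, applyVF_zero_right]

lemma bracket_zero_right (v : VF3) : bracket v 0 = 0 := by
  funext i; simp [bracket, applyVF_zero_left, applyVF_zero_right]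

lemma bracket_add_left (v v' w : VF3) :
    bracket (v + v') w = bracket v w + bracket v' w := by
  funext i
  simp only [bracket, Pi.add_apply, applyVF_add_left, applyVF_add_right]
  ring

lemma bracket_add_right (v w w' : VF3) :
    bracket v (w + w') = bracket v w + bracket v w' := by
  funext i
  simp only [bracket, Pi.add_apply, applyVF_add_left, applyVF_add_right]
  ring

lemma bracket_smul_left (c : ℝ) (v w : VF3) :
    bracket (c • v) w = c • bracket v w := by
  funext i
  simp only [bracket, Pi.smul_apply, applyVF_smul_left, applyVF_smul_right, smul_sub]

lemma bracket_smul_right (c : ℝ) (v w : VF3) :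
    bracket v (c • w) = c • bracket v w := by
  funext i
  simp only [bracket, Pi.smul_apply, applyVF_smul_left, applyVF_smul_right, smul_sub]

lemma Tn_mem (p q : ℕ) : Tn p q ∈ Tfrak := by
  refine Submodule.subset_span ⟨(p : ℤ), (p : ℤ) + (q : ℤ), by positivity, by omega, ?_⟩
  rw [Tvf_eq]
  have h1 : ((p : ℤ)).toNat = p := by omega
  have h2 : ((p : ℤ) + (q : ℤ) - (p : ℤ)).toNat = q := by omega
  rw [h1, h2]

/-- 𝔗 ⊆ 𝔏 is an abelian Lie ideal of 𝔏: `[v,w] ∈ 𝔗` for all `v ∈ 𝔏`, `w ∈ 𝔗`,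
and `[w,w'] = 0` for all `w, w' ∈ 𝔗`. -/
theorem Tfrak_abelian_ideal :
    Tfrak ≤ Lfrak ∧
    (∀ v ∈ Lfrak, ∀ w ∈ Tfrak, bracket v w ∈ Tfrak) ∧
    ∀ w ∈ Tfrak, ∀ w' ∈ Tfrak, bracket w w' = 0 := by
  have key1 : ∀ v ∈ Lfrak, ∀ p q : ℕ, bracket v (Tn p q) ∈ Tfrak := by
    intro v hv
    induction hv using Submodule.span_induction with
    | mem x hx =>
      intro p q
      rcases hx with hx | hx
      · obtain ⟨l, k, h1, h2, rfl⟩ := hx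
        have hB : (l + 1).toNat = 0 → -((l + 1 : ℤ) : ℝ) / 2 = 0 := by
          intro h0
          have hl : l = -1 := by omega
          subst hl; norm_num
        rw [Fvf_eq l k h1, bracket_Gn_Tn _ _ _ _ _ _ hB]
        exact Submodule.smul_mem _ _ (Tn_mem _ _)
      · obtain ⟨m, n, h1, h2, rfl⟩ := hx
        rw [Tvf_eq, bracket_Tn]
        exact Submodule.zero_mem _
    | zero => intro p q; rw [bracket_zero_left]; exact Submodule.zero_mem _
    | add x y hx hy ihx ihy =>
      intro p q; rw [bracket_add_left]; exact Submodule.add_mem _ (ihx p q) (ihy p q)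
    | smul c x hx ih =>
      intro p q; rw [bracket_smul_left]; exact Submodule.smul_mem _ _ (ih p q)
  have key2 : ∀ w ∈ Tfrak, ∀ p q : ℕ, bracket w (Tn p q) = 0 := by
    intro w hw
    induction hw using Submodule.span_induction with
    | mem x hx =>
      intro p q
      obtain ⟨m, n, h1, h2, rfl⟩ := hx
      rw [Tvf_eq, bracket_Tn]
    | zero => intro p q; rw [bracket_zero_left]
    | add x y hx hy ihx ihy =>
      intro p q; rw [bracket_add_left, ihx p q, ihy p q, add_zero]
    | smul c x hx ih =>
      intro p q; rw [bracket_smul_left, ih p q, smul_zero]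
  refine ⟨Submodule.span_mono Set.subset_union_right, ?_, ?_⟩
  · intro v hv w hw
    induction hw using Submodule.span_induction with
    | mem x hx =>
      obtain ⟨m, n, h1, h2, rfl⟩ := hx
      rw [Tvf_eq]
      exact key1 v hv _ _
    | zero => rw [bracket_zero_right]; exact Submodule.zero_mem _
    | add x y hx hy ihx ihy => rw [bracket_add_right]; exact Submodule.add_mem _ ihx ihy
    | smul c x hx ih => rw [bracket_smul_right]; exact Submodule.smul_mem _ _ ih
  · intro w hw w' hw'
    induction hw' using Submodule.span_induction with
    | mem x hx =>
      obtain ⟨m, n, h1, h2, rfl⟩ := hx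
      rw [Tvf_eq]
      exact key2 w hw _ _
    | zero => rw [bracket_zero_right]
    | add x y hx hy ihx ihy => rw [bracket_add_right, ihx, ihy, add_zero]
    | smul c x hx ih => rw [bracket_smul_right, ih, smul_zero]
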